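/- Let Γ and Γ_0 be regular cones in ℝⁿ such that the closure of Γ_0 is contained in Γ ∪ {0}. Then ∫_{Γ*} e^{−4π y·t} dt → 0 as |y| → ∞ with y in the closure of Γ_0: for every ε > 0 there is R > 0 such that for all y in the closure of Γ_0 with |y| > R, ∫_{Γ*} e^{−4π y·t} dt ≤ ε. -/

import Mathlib

/-!
The dual cone `Γ*` is closed, and since `Γ` is open every nonzero `t ∈ Γ*` pairs strictly
positively with every point of `Γ`, hence with every nonzero point of `closure Γ₀`. By
compactness of the unit spheres of `closure Γ₀` and `Γ*` and homogeneity there is `c > 0` with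
`c ‖y‖ ‖t‖ ≤ ⟪y, t⟫` on `closure Γ₀ × Γ*`. So the integrand is at most `exp (-4πc ‖y‖ ‖t‖)`,
whose integral over `ℝⁿ` is `(4πc ‖y‖)⁻ⁿ ∫ exp (-‖t‖)` by scaling.
-/

open MeasureTheory

/-- The dual cone `Γ* = {t : x·t ≥ 0 for all x ∈ Γ}` of a set `Γ ⊆ ℝⁿ`. -/
def dualCone {n : ℕ} (Γ : Set (EuclideanSpace ℝ (Fin n))) : Set (EuclideanSpace ℝ (Fin n)) :=
  {t | ∀ x ∈ Γ, 0 ≤ ∑ j, x j * t j}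

/-- A regular cone in `ℝⁿ`: a nonempty open set not containing `0`, closed under positive
linear combinations, whose dual cone has nonempty interior. -/
def IsRegularCone {n : ℕ} (Γ : Set (EuclideanSpace ℝ (Fin n))) : Prop :=
  IsOpen Γ ∧ Γ.Nonempty ∧ (0 : EuclideanSpace ℝ (Fin n)) ∉ Γ ∧
    (∀ x ∈ Γ, ∀ y ∈ Γ, ∀ a b : ℝ, 0 < a → 0 < b → a • x + b • y ∈ Γ) ∧
    (interior (dualCone Γ)).Nonempty

open Filter Topology Module
open scoped RealInnerProductSpace

section InnerProductSpace

variable {E : Type*} [NormedAddCommGroup E] [InnerProductSpace ℝ E]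

lemma inner_pos_of_mem_innerDual [CompleteSpace E] {Γ : Set E} (hΓ : IsOpen Γ) {y t : E}
    (hy : y ∈ Γ) (ht : t ∈ ProperCone.innerDual Γ) (ht0 : t ≠ 0) : 0 < ⟪y, t⟫ := by
  have hlim : Tendsto (fun δ : ℝ => y - δ • t) (𝓝[>] 0) (𝓝 y) := by
    have : Continuous fun δ : ℝ => y - δ • t := by fun_prop
    simpa using (this.tendsto 0).mono_left nhdsWithin_le_nhds
  obtain ⟨δ, hδ, hδΓ⟩ :=
    (eventually_mem_nhdsWithin.and (hlim.eventually (hΓ.mem_nhds hy))).exists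
  have hδt : 0 ≤ ⟪y - δ • t, t⟫ := ProperCone.mem_innerDual.1 ht hδΓ
  rw [inner_sub_left, real_inner_smul_left, real_inner_self_eq_norm_sq] at hδt
  have : 0 < δ * ‖t‖ ^ 2 := mul_pos hδ (by positivity)
  linarith

lemma exists_pos_mul_norm_mul_norm_le_inner [ProperSpace E] {C D : Set E}
    (hC : IsClosed C) (hD : IsClosed D)
    (hCsmul : ∀ a : ℝ, 0 < a → ∀ y ∈ C, a • y ∈ C) (hDsmul : ∀ a : ℝ, 0 < a → ∀ t ∈ D, a • t ∈ D)
    (hpos : ∀ y ∈ C, ∀ t ∈ D, y ≠ 0 → t ≠ 0 → 0 < ⟪y, t⟫) :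
    ∃ c > 0, ∀ y ∈ C, ∀ t ∈ D, c * (‖y‖ * ‖t‖) ≤ ⟪y, t⟫ := by
  set K := (C ∩ Metric.sphere 0 1) ×ˢ (D ∩ Metric.sphere 0 1)
  have hK : IsCompact K :=
    ((isCompact_sphere 0 1).inter_left hC).prod ((isCompact_sphere 0 1).inter_left hD)
  obtain ⟨c, hc, hcK⟩ := hK.exists_forall_le' (f := fun p : E × E => ⟪p.1, p.2⟫)
    (by fun_prop) fun p ⟨⟨hy, hy1⟩, ⟨ht, ht1⟩⟩ =>
      hpos _ hy _ ht (ne_zero_of_mem_unit_sphere ⟨_, hy1⟩) (ne_zero_of_mem_unit_sphere ⟨_, ht1⟩)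
  refine ⟨c, hc, fun y hy t ht => ?_⟩
  rcases eq_or_ne y 0 with rfl | hy0
  · simp
  rcases eq_or_ne t 0 with rfl | ht0
  · simp
  have hyn : 0 < ‖y‖ := norm_pos_iff.2 hy0
  have htn : 0 < ‖t‖ := norm_pos_iff.2 ht0
  have hnormalized := hcK (‖y‖⁻¹ • y, ‖t‖⁻¹ • t)
    ⟨⟨hCsmul _ (inv_pos.2 hyn) y hy, by simp [norm_smul, hyn.ne']⟩,
      ⟨hDsmul _ (inv_pos.2 htn) t ht, by simp [norm_smul, htn.ne']⟩⟩
  simp only [real_inner_smul_left, real_inner_smul_right] at hnormalized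
  calc c * (‖y‖ * ‖t‖) ≤ ‖t‖⁻¹ * (‖y‖⁻¹ * ⟪y, t⟫) * (‖y‖ * ‖t‖) := by gcongr
    _ = ⟪y, t⟫ := by field_simp

end InnerProductSpace

section AddHaar

variable {E : Type*} [NormedAddCommGroup E] [NormedSpace ℝ E] [FiniteDimensional ℝ E]
  [MeasurableSpace E] [BorelSpace E] (μ : Measure E) [μ.IsAddHaarMeasure]

lemma integrable_exp_neg_mul_norm [Nontrivial E] {a : ℝ} (ha : 0 < a) :
    Integrable (fun x => Real.exp (-(a * ‖x‖))) μ := by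
  rw [integrable_fun_norm_addHaar μ (f := fun r => Real.exp (-(a * r)))]
  refine (integrableOn_rpow_mul_exp_neg_mul_rpow (p := 1) (s := (finrank ℝ E - 1 : ℕ))
    (neg_one_lt_zero.trans_le (Nat.cast_nonneg _)) one_pos ha).congr_fun (fun r _ => ?_)
    measurableSet_Ioi
  simp [Real.rpow_natCast]

lemma integral_exp_neg_mul_norm {a : ℝ} (ha : 0 < a) :
    ∫ x, Real.exp (-(a * ‖x‖)) ∂μ = (a ^ finrank ℝ E)⁻¹ * ∫ x, Real.exp (-‖x‖) ∂μ := by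
  have := μ.integral_comp_smul (fun x => Real.exp (-‖x‖)) a
  simp only [norm_smul, Real.norm_eq_abs, abs_of_pos ha] at this
  rw [this, abs_of_pos (by positivity), smul_eq_mul]

lemma setIntegral_exp_neg_le_of_mul_norm_le [Nontrivial E] {D : Set E} {φ : E → ℝ} {a : ℝ}
    (ha : 0 < a) (hφ : ∀ t ∈ D, a * ‖t‖ ≤ φ t) (hD : MeasurableSet D) :
    ∫ t in D, Real.exp (-φ t) ∂μ ≤ (a ^ finrank ℝ E)⁻¹ * ∫ t, Real.exp (-‖t‖) ∂μ := by
  have hint := integrable_exp_neg_mul_norm μ ha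
  calc ∫ t in D, Real.exp (-φ t) ∂μ ≤ ∫ t in D, Real.exp (-(a * ‖t‖)) ∂μ := by
        refine integral_mono_of_nonneg (ae_of_all _ fun t => (Real.exp_pos _).le)
          hint.integrableOn ((ae_restrict_iff' hD).2 (ae_of_all _ fun t ht => ?_))
        exact Real.exp_le_exp.2 (neg_le_neg (hφ t ht))
    _ ≤ ∫ t, Real.exp (-(a * ‖t‖)) ∂μ :=
        setIntegral_le_integral hint (ae_of_all _ fun t => (Real.exp_pos _).le)
    _ = _ := integral_exp_neg_mul_norm μ ha

end AddHaar

lemma sum_mul_eq_inner {n : ℕ} (x t : EuclideanSpace ℝ (Fin n)) : ∑ j, x j * t j = ⟪x, t⟫ := by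
  simp [PiLp.inner_apply, mul_comm]

lemma dualCone_eq_innerDual {n : ℕ} (Γ : Set (EuclideanSpace ℝ (Fin n))) :
    dualCone Γ = ProperCone.innerDual Γ := by
  ext t
  simp [dualCone, sum_mul_eq_inner]

lemma IsRegularCone.smul_mem_closure {n : ℕ} {Γ : Set (EuclideanSpace ℝ (Fin n))}
    (hΓ : IsRegularCone Γ) {a : ℝ} (ha : 0 < a) {y : EuclideanSpace ℝ (Fin n)}
    (hy : y ∈ closure Γ) : a • y ∈ closure Γ := by
  obtain ⟨-, -, -, hadd, -⟩ := hΓ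
  refine map_mem_closure (continuous_const_smul a) hy fun x hx => ?_
  simpa [← add_smul] using hadd x hx x hx (a / 2) (a / 2) (by positivity) (by positivity)

/-- If `Γ₀`, `Γ` are regular cones in `ℝⁿ` with `closure Γ₀ ⊆ Γ ∪ {0}`, then the diagonal of
the Cauchy–Szegő kernel `∫_{Γ*} e^{−4π y·t} dt` tends to `0` as `|y| → ∞` with
`y ∈ closure Γ₀`. -/
theorem szego_diagonal_vanishes_at_infinity
    {n : ℕ} (Γ Γ₀ : Set (EuclideanSpace ℝ (Fin n)))
    (hΓ : IsRegularCone Γ) (hΓ₀ : IsRegularCone Γ₀)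
    (hsub : closure Γ₀ ⊆ Γ ∪ {0}) :
    ∀ ε : ℝ, 0 < ε → ∃ R > (0 : ℝ), ∀ y ∈ closure Γ₀, R < ‖y‖ →
      (∫ t in dualCone Γ, Real.exp (-(4 * Real.pi * ∑ j, y j * t j))) ≤ ε := by
  obtain ⟨hΓo, ⟨x₀, hx₀⟩, hΓ0, -, -⟩ := hΓ
  have : Nontrivial (EuclideanSpace ℝ (Fin n)) := ⟨⟨x₀, 0, ne_of_mem_of_not_mem hx₀ hΓ0⟩⟩
  set d := finrank ℝ (EuclideanSpace ℝ (Fin n))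
  have hd : d ≠ 0 := finrank_pos.ne'
  set D := ProperCone.innerDual Γ
  obtain ⟨c, hc, hcone⟩ := exists_pos_mul_norm_mul_norm_le_inner isClosed_closure D.isClosed
    (fun a ha y hy => hΓ₀.smul_mem_closure ha hy) (fun a ha t ht => D.smul_mem ht ha.le)
    fun y hy t ht hy0 ht0 => inner_pos_of_mem_innerDual hΓo ((hsub hy).resolve_right hy0) ht ht0
  set I := ∫ t : EuclideanSpace ℝ (Fin n), Real.exp (-‖t‖)
  have hdecay : Tendsto (fun r : ℝ => ((4 * Real.pi * c * r) ^ d)⁻¹ * I) atTop (𝓝 0) := by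
    simpa using ((tendsto_pow_atTop hd).comp (tendsto_id.const_mul_atTop
      (by positivity : 0 < 4 * Real.pi * c))).inv_tendsto_atTop.mul_const I
  intro ε hε
  obtain ⟨R, hR⟩ := eventually_atTop.1 (hdecay.eventually (eventually_le_nhds hε))
  refine ⟨max R 1, by positivity, fun y hy hRy => ?_⟩
  have hy0 : 0 < ‖y‖ := (zero_lt_one.trans_le (le_max_right R 1)).trans hRy
  rw [dualCone_eq_innerDual]
  simp_rw [sum_mul_eq_inner]
  refine (setIntegral_exp_neg_le_of_mul_norm_le volume (by positivity) (fun t ht => ?_)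
    D.isClosed.measurableSet).trans (hR _ (le_of_max_le_left hRy.le))
  nlinarith [hcone y hy t ht, Real.pi_pos]
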